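/- arXiv:1306.6253 — 3 statements merged into one kernel-verified Lean document; each statement's English description precedes it below -/
import Mathlib

section
/- Let V = ℂⁿ with basis v₁,…,vₙ, e₁ = Σ vᵢ, p₂ = Σ vⱼ², and τ_{kl} = v_k v_l − v_k² − v_l² + p₂ for k < l. Let T ⊆ Sym²V be the span of all τ_{kl}. Then T ∩ e₁·V = 0, where e₁·V = { e₁·w : w ∈ V } ⊆ Sym²V. -/
/-!
Evaluating a quadratic form `q` at the unit vectors `vᵢ` and at `𝟙 - vₘ` gives, for each `m`, the
functional `q ↦ ∑ᵢ q(vᵢ) - q(𝟙 - vₘ)`, which vanishes on every `τ_{kl}` (both terms equal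
`n - 2`). On `e₁ · ∑ⱼ cⱼ vⱼ` it equals `(n - 1) cₘ - (n - 2) ∑ⱼ cⱼ`. Summing these relations over
`m` gives `(n² - 3n + 1) ∑ⱼ cⱼ = 0`, and `n² - 3n + 1` has no integer root, so `∑ⱼ cⱼ = 0` and
then every `cₘ = 0`.
-/

open MvPolynomial

lemma Nat.sq_add_one_ne_three_mul (n : ℕ) : n ^ 2 + 1 ≠ 3 * n := by
  rcases Nat.lt_or_ge n 3 with h | h
  · interval_cases n <;> norm_num
  · nlinarith

section CommRing

variable {R σ : Type*} [CommRing R] [Fintype σ] [DecidableEq σ]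

noncomputable def tau (k l : σ) : MvPolynomial σ R :=
  X k * X l - X k ^ 2 - X l ^ 2 + ∑ j, X j ^ 2

noncomputable def tauAnnihilator (m : σ) : MvPolynomial σ R →ₗ[R] R :=
  ∑ i, (aeval (Pi.single i 1 : σ → R)).toLinearMap -
    (aeval (1 - Pi.single m 1 : σ → R)).toLinearMap

lemma tauAnnihilator_apply (m : σ) (q : MvPolynomial σ R) :
    tauAnnihilator m q = ∑ i, eval (Pi.single i 1) q - eval (1 - Pi.single m 1) q := by
  simp [tauAnnihilator, LinearMap.sum_apply]

lemma tauAnnihilator_tau (m : σ) {k l : σ} (hkl : k ≠ l) :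
    tauAnnihilator m (tau k l : MvPolynomial σ R) = 0 := by
  simp [tauAnnihilator_apply, tau, Pi.single_apply, sub_sq, mul_sub, mul_ite,
    Finset.sum_add_distrib, Finset.sum_sub_distrib]
  split_ifs <;> simp_all <;> ring

lemma tauAnnihilator_sum_X_mul (m : σ) (c : σ → R) :
    tauAnnihilator m ((∑ i, X i) * ∑ j, c j • X j) =
      (Fintype.card σ - 1) * c m - (Fintype.card σ - 2) * ∑ j, c j := by
  simp [tauAnnihilator_apply, Pi.single_apply, mul_sub, Finset.sum_sub_distrib]
  ring

end CommRing

lemma eq_zero_of_forall_card_sub_one_mul_eq {K σ : Type*} [Field K] [CharZero K] [Fintype σ]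
    (c : σ → K) (h : ∀ m, (Fintype.card σ - 1 : K) * c m = (Fintype.card σ - 2) * ∑ j, c j) :
    c = 0 := by
  have hsum : (Fintype.card σ - 1 : K) * ∑ j, c j =
      Fintype.card σ * ((Fintype.card σ - 2) * ∑ j, c j) := by
    simp [Finset.mul_sum, h]
  have hquad : ((Fintype.card σ : K) ^ 2 + 1) - 3 * Fintype.card σ ≠ 0 :=
    sub_ne_zero.2 (by exact_mod_cast Nat.sq_add_one_ne_three_mul _)
  have hC : ∑ j, c j = 0 :=
    (mul_eq_zero.1 (by linear_combination -hsum)).resolve_left hquad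
  funext m
  by_cases hN : Fintype.card σ = 1
  · obtain ⟨x, hx⟩ := Fintype.card_eq_one_iff.1 hN
    rwa [Fintype.sum_eq_single m fun j hj => absurd ((hx j).trans (hx m).symm) hj] at hC
  · have hN' : (Fintype.card σ - 1 : K) ≠ 0 := sub_ne_zero.2 (by exact_mod_cast hN)
    simpa [hC, hN'] using h m

theorem span_tau_inf_e1V_eq_bot_general (n : ℕ)
    (e₁ p₂ : MvPolynomial (Fin n) ℂ)
    (he₁ : e₁ = ∑ i : Fin n, X i) (hp₂ : p₂ = ∑ j : Fin n, (X j) ^ 2)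
    (τ : {p : Fin n × Fin n // p.1 < p.2} → MvPolynomial (Fin n) ℂ)
    (hτ : ∀ kl, τ kl = X kl.1.1 * X kl.1.2 - (X kl.1.1) ^ 2 - (X kl.1.2) ^ 2 + p₂)
    (T : Submodule ℂ (MvPolynomial (Fin n) ℂ)) (hT : T = Submodule.span ℂ (Set.range τ))
    (V : Submodule ℂ (MvPolynomial (Fin n) ℂ))
    (hV : V = Submodule.span ℂ (Set.range (X : Fin n → MvPolynomial (Fin n) ℂ))) :
    T ⊓ Submodule.map (LinearMap.mulLeft ℂ e₁) V = ⊥ := by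
  subst he₁ hp₂ hT hV
  refine eq_bot_iff.2 fun q ⟨hqT, hqV⟩ => ?_
  obtain ⟨w, hw, rfl⟩ := Submodule.mem_map.1 hqV
  obtain ⟨c, rfl⟩ := (Submodule.mem_span_range_iff_exists_fun ℂ).1 hw
  have hT_le : ∀ m, Submodule.span ℂ (Set.range τ) ≤ LinearMap.ker (tauAnnihilator m) :=
    fun m => Submodule.span_le.2 <| Set.range_subset_iff.2 fun kl => by
      rw [SetLike.mem_coe, LinearMap.mem_ker, hτ]
      exact tauAnnihilator_tau m kl.2.ne
  have hc : c = 0 := eq_zero_of_forall_card_sub_one_mul_eq c fun m => by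
    have := hT_le m hqT
    rw [LinearMap.mem_ker, LinearMap.mulLeft_apply, tauAnnihilator_sum_X_mul] at this
    simpa [sub_eq_zero] using this
  simp [hc]

/-- With `Sym²V` modeled inside `MvPolynomial (Fin n) ℂ`, the span `T` of the
`τ_{kl} = v_k v_l − v_k² − v_l² + p₂` (for `k < l`) meets `e₁·V` (the image of
`w ↦ e₁·w` on the linear span `V` of the variables) in `0`. -/
theorem span_tau_inf_e1V_eq_bot (n : ℕ) (hn : 2 ≤ n)
    (e₁ p₂ : MvPolynomial (Fin n) ℂ)
    (he₁ : e₁ = ∑ i : Fin n, X i) (hp₂ : p₂ = ∑ j : Fin n, (X j) ^ 2)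
    (τ : {p : Fin n × Fin n // p.1 < p.2} → MvPolynomial (Fin n) ℂ)
    (hτ : ∀ kl, τ kl = X kl.1.1 * X kl.1.2 - (X kl.1.1) ^ 2 - (X kl.1.2) ^ 2 + p₂)
    (T : Submodule ℂ (MvPolynomial (Fin n) ℂ)) (hT : T = Submodule.span ℂ (Set.range τ))
    (V : Submodule ℂ (MvPolynomial (Fin n) ℂ))
    (hV : V = Submodule.span ℂ (Set.range (X : Fin n → MvPolynomial (Fin n) ℂ))) :
    T ⊓ Submodule.map (LinearMap.mulLeft ℂ e₁) V = ⊥ :=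
  span_tau_inf_e1V_eq_bot_general n e₁ p₂ he₁ hp₂ τ hτ T hT V hV
end

section
/- Let V = ℂⁿ with basis v₁,…,vₙ, let e₁ = Σ vᵢ, and let W = V / ℂe₁ (equivalently, the hyperplane Σ xᵢ = 0, via the projection π : V → W with π(vᵢ) = wᵢ). Define σ_{kl} = π(v_k v_l − v_k² − v_l² + p₂) ∈ Sym²W for k < l. Then the n(n−1)/2 elements σ_{kl} form a basis of Sym²W; in particular they span Sym²W. -/
/-!
Write `w a` for the image in `W` of the basis vector `v a`, so that `∑ a, w a = 0`, and
`S = ∑ a, w a ^ 2` for the image of `p₂`. For fixed `a`, the sum of `σ_{ab}` over `b ≠ a` is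
`(n - 2) S - (n - 1) w_a²`, and summing these over `a` gives `(n² - 3n + 1) S`.
As `n² - 3n + 1` has no integer root, `S`, then every `w_a²`, then every
`w_a w_b = σ_{ab} + w_a² + w_b² - S` lies in the span of the `σ_{kl}`. So the `n(n-1)/2`
elements `σ_{kl}` span `Sym²W`, whose dimension is `n(n-1)/2`, and hence form a basis.
-/

open MvPolynomial

namespace MvPolynomial

variable {σ R : Type*} [CommSemiring R]

variable (R) in
noncomputable def sym2Monomial (z : Sym2 σ) : MvPolynomial σ R :=
  Sym2.lift ⟨fun i j => X i * X j, fun _ _ => mul_comm _ _⟩ z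

lemma range_sym2Monomial :
    Set.range (sym2Monomial (σ := σ) R) = {q | ∃ i j, q = X i * X j} := by
  ext q
  simp [sym2Monomial, Sym2.exists, eq_comm]

lemma span_X_mul_X_eq_mul :
    Submodule.span R {q : MvPolynomial σ R | ∃ i j, q = X i * X j} =
      Submodule.span R (Set.range X) * Submodule.span R (Set.range X) := by
  rw [Submodule.span_mul_span]
  congr 1
  ext q
  simp [Set.mem_mul, eq_comm]

lemma linearIndependent_sym2Monomial [Nontrivial R] :
    LinearIndependent R (sym2Monomial (σ := σ) R) := by
  let e : Sym2 σ → σ →₀ ℕ :=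
    Sym2.lift ⟨fun i j => Finsupp.single i 1 + Finsupp.single j 1, fun _ _ => add_comm _ _⟩
  have he : Function.Injective e := by
    rintro ⟨i, j⟩ ⟨k, l⟩ h
    simpa [e, Finsupp.single_add_single_eq_single_add_single, Sym2.eq_iff] using h
  convert (basisMonomials σ R).linearIndependent.comp e he
  ext ⟨i, j⟩
  simp [sym2Monomial, e, X, monomial_mul]

lemma finrank_span_X_mul_X {K : Type*} [Field K] [Fintype σ] :
    Module.finrank K (Submodule.span K {q : MvPolynomial σ K | ∃ i j, q = X i * X j}) =
      (Fintype.card σ + 1).choose 2 := by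
  rw [← range_sym2Monomial, finrank_span_eq_card linearIndependent_sym2Monomial, Sym2.card]

end MvPolynomial

lemma Fintype.card_subtype_fst_lt_snd {α : Type*} [Fintype α] [LinearOrder α] :
    Fintype.card {p : α × α // p.1 < p.2} = (Fintype.card α).choose 2 := by
  rw [Fintype.card_subtype]
  exact Fintype.card_product_filter_lt

open Finset

section SigmaPair

variable {K A ι : Type*} [Field K] [CommRing A] [Algebra K A] [Fintype ι]

/-- The paper's `σ_{ab} = π(v_a v_b - v_a² - v_b² + p₂)`, where `w = π ∘ v`. -/
def sigmaPair (w : ι → A) (a b : ι) : A := w a * w b - w a ^ 2 - w b ^ 2 + ∑ j, w j ^ 2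

lemma sigmaPair_comm (w : ι → A) (a b : ι) : sigmaPair w a b = sigmaPair w b a := by
  unfold sigmaPair; ring

lemma sigmaPair_mem_mul {L : Submodule K A} {w : ι → A} (hw : ∀ i, w i ∈ L) (a b : ι) :
    sigmaPair w a b ∈ L * L := by
  have hmul : ∀ i j, w i * w j ∈ L * L := fun i j => Submodule.mul_mem_mul (hw i) (hw j)
  simp only [sigmaPair, sq]
  exact add_mem (sub_mem (sub_mem (hmul a b) (hmul a a)) (hmul b b))
    (sum_mem fun j _ => hmul j j)

lemma sum_sigmaPair_erase [DecidableEq ι] {w : ι → A} (hw : ∑ i, w i = 0) (a : ι) :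
    ∑ b ∈ univ.erase a, sigmaPair w a b =
      ((Fintype.card ι : K) - 2) • ∑ j, w j ^ 2 - ((Fintype.card ι : K) - 1) • w a ^ 2 := by
  have hsum : ∑ b ∈ univ.erase a, w b = -w a := by
    rw [sum_erase_eq_sub (mem_univ a), hw, zero_sub]
  have hsq : ∑ b ∈ univ.erase a, w b ^ 2 = ∑ j, w j ^ 2 - w a ^ 2 :=
    sum_erase_eq_sub (mem_univ a)
  simp only [sigmaPair, sum_add_distrib, sum_sub_distrib, ← mul_sum, hsum, hsq, sum_const,
    card_erase_of_mem (mem_univ a), card_univ, nsmul_eq_mul]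
  simp only [Nat.cast_pred (Fintype.card_pos_iff.2 ⟨a⟩), Algebra.smul_def, map_sub, map_natCast,
    map_ofNat, map_one]
  ring

variable [LinearOrder ι]

def sigmaFamily (w : ι → A) (p : {p : ι × ι // p.1 < p.2}) : A := sigmaPair w p.1.1 p.1.2

variable (K)

lemma sigmaPair_mem_span (w : ι → A) {a b : ι} (hab : a ≠ b) :
    sigmaPair w a b ∈ Submodule.span K (Set.range (sigmaFamily w)) := by
  rcases hab.lt_or_gt with h | h
  · exact Submodule.subset_span ⟨⟨(a, b), h⟩, rfl⟩
  · rw [sigmaPair_comm]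
    exact Submodule.subset_span ⟨⟨(b, a), h⟩, rfl⟩

lemma natCast_mul_sub_two_sub_ne_zero [CharZero K] (N : ℕ) :
    (N : K) * (N - 2) - (N - 1) ≠ 0 := by
  intro h
  have hz : (N : ℤ) * (N - 2) - (N - 1) = 0 := by exact_mod_cast h
  rcases lt_or_ge N 3 with hN | hN
  · interval_cases N <;> norm_num at hz
  · nlinarith

variable {w : ι → A}

lemma sum_sigmaPair_erase_mem_span [DecidableEq ι] (hw : ∑ i, w i = 0) (a : ι) :
    ((Fintype.card ι : K) - 2) • ∑ j, w j ^ 2 - ((Fintype.card ι : K) - 1) • w a ^ 2 ∈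
      Submodule.span K (Set.range (sigmaFamily w)) := by
  rw [← sum_sigmaPair_erase hw a]
  exact sum_mem fun b hb => sigmaPair_mem_span K w (ne_of_mem_erase hb).symm

lemma sum_sq_mem_span_sigmaFamily [CharZero K] (hw : ∑ i, w i = 0) :
    ∑ j, w j ^ 2 ∈ Submodule.span K (Set.range (sigmaFamily w)) := by
  classical
  set N : K := (Fintype.card ι : K)
  have htotal : ∑ a, ((N - 2) • ∑ j, w j ^ 2 - (N - 1) • w a ^ 2) =
      (N * (N - 2) - (N - 1)) • ∑ j, w j ^ 2 := by
    rw [sum_sub_distrib, sum_const, ← smul_sum, card_univ, ← Nat.cast_smul_eq_nsmul K]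
    module
  rw [← Submodule.smul_mem_iff _ (natCast_mul_sub_two_sub_ne_zero K _), ← htotal]
  exact sum_mem fun a _ => sum_sigmaPair_erase_mem_span K hw a

lemma sq_mem_span_sigmaFamily [CharZero K] [Nontrivial ι] (hw : ∑ i, w i = 0) (a : ι) :
    w a ^ 2 ∈ Submodule.span K (Set.range (sigmaFamily w)) := by
  classical
  have hN : (Fintype.card ι : K) - 1 ≠ 0 := by
    rw [sub_ne_zero, Ne, Nat.cast_eq_one]
    exact Fintype.one_lt_card.ne'
  rw [← Submodule.smul_mem_iff _ hN]
  convert sub_mem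
    (Submodule.smul_mem _ ((Fintype.card ι : K) - 2) (sum_sq_mem_span_sigmaFamily K hw))
    (sum_sigmaPair_erase_mem_span K hw a) using 1
  abel

lemma mul_mem_span_sigmaFamily [CharZero K] [Nontrivial ι] (hw : ∑ i, w i = 0) (a b : ι) :
    w a * w b ∈ Submodule.span K (Set.range (sigmaFamily w)) := by
  rcases eq_or_ne a b with rfl | hab
  · rw [← sq]
    exact sq_mem_span_sigmaFamily K hw a
  · have h : w a * w b = sigmaPair w a b + w a ^ 2 + w b ^ 2 - ∑ j, w j ^ 2 := by
      unfold sigmaPair; ring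
    rw [h]
    exact sub_mem (add_mem (add_mem (sigmaPair_mem_span K w hab)
      (sq_mem_span_sigmaFamily K hw a)) (sq_mem_span_sigmaFamily K hw b))
      (sum_sq_mem_span_sigmaFamily K hw)

end SigmaPair

/-- Let `W = V/ℂe₁`, realized concretely with coordinates `Fin (n-1)` via the
projection `π(vᵢ) = wᵢ`, where `wᵢ = Xᵢ` for `i < n-1` and `w_{n-1} = -(X₀ + ⋯ + X_{n-2})`.
`Sym²W` is modeled as the span of the quadratic monomials in `MvPolynomial (Fin (n-1)) ℂ`.
The `n(n-1)/2` elements `σ_{kl} = π(v_k v_l − v_k² − v_l² + p₂)` (for `k < l`) form a basis of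
`Sym²W`: they are linearly independent and they span `Sym²W`. -/
theorem sigma_basis_of_sym2_quotient (n : ℕ) (hn : 2 ≤ n)
    (w : Fin n → MvPolynomial (Fin (n - 1)) ℂ)
    (hw : ∀ i : Fin n, w i = if h : (i : ℕ) < n - 1 then X (⟨i, h⟩ : Fin (n - 1))
      else -(∑ j : Fin (n - 1), X j))
    (σ : {p : Fin n × Fin n // p.1 < p.2} → MvPolynomial (Fin (n - 1)) ℂ)
    (hσ : ∀ kl, σ kl =
      w kl.1.1 * w kl.1.2 - (w kl.1.1) ^ 2 - (w kl.1.2) ^ 2 + ∑ j : Fin n, (w j) ^ 2)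
    (Sym2W : Submodule ℂ (MvPolynomial (Fin (n - 1)) ℂ))
    (hS : Sym2W = Submodule.span ℂ {q | ∃ i j : Fin (n - 1), q = X i * X j}) :
    LinearIndependent ℂ σ ∧ Submodule.span ℂ (Set.range σ) = Sym2W := by
  obtain ⟨m, rfl⟩ : ∃ m, n = m + 1 := ⟨n - 1, by omega⟩
  have : Nontrivial (Fin (m + 1)) := Fin.nontrivial_iff_two_le.2 hn
  have hw_castSucc (i : Fin m) : w i.castSucc = X i := by simp [hw]
  have hw_last : w (Fin.last m) = -∑ j : Fin m, X j := by simp [hw]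
  have hw_sum : ∑ a, w a = 0 := by simp [Fin.sum_univ_castSucc, hw_castSucc, hw_last]
  have hw_mem (a : Fin (m + 1)) : w a ∈ Submodule.span ℂ (Set.range X) := by
    induction a using Fin.lastCases with
    | last => exact hw_last ▸ neg_mem (sum_mem fun j _ => Submodule.subset_span ⟨j, rfl⟩)
    | cast i => exact hw_castSucc i ▸ Submodule.subset_span ⟨i, rfl⟩
  obtain rfl : σ = sigmaFamily w := funext hσ
  have hspan : Submodule.span ℂ (Set.range (sigmaFamily w)) = Sym2W := by
    refine le_antisymm ?_ ?_
    · rw [hS, span_X_mul_X_eq_mul, Submodule.span_le]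
      rintro _ ⟨kl, rfl⟩
      exact sigmaPair_mem_mul hw_mem _ _
    · rw [hS, Submodule.span_le]
      rintro _ ⟨i, j, rfl⟩
      rw [← hw_castSucc i, ← hw_castSucc j]
      exact mul_mem_span_sigmaFamily ℂ hw_sum _ _
  refine ⟨?_, hspan⟩
  rw [linearIndependent_iff_card_eq_finrank_span, Set.finrank, hspan, hS, finrank_span_X_mul_X,
    Fintype.card_subtype_fst_lt_snd]
  simp
end

section
/- Let n ≥ 2 and let w₁,…,wₙ be vectors in ℂⁿ⁻¹ in general position (any n−1 of them are linearly independent), with w₁ + ⋯ + wₙ = 0. For each pair k < l set σ_{kl} = w_k w_l + Σ_{j ≠ k,l} wⱼ² ∈ Sym²(ℂⁿ⁻¹) (symmetric product). Then the σ_{kl} span Sym²(ℂⁿ⁻¹). -/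
open MvPolynomial Finset
open scoped Pointwise

/-! Write `aₖ` for the linear form of `wₖ` and `S = Σ aⱼ²`, so that `σₖₗ = aₖaₗ + S - aₖ² - aₗ²`.
Since `Σ aₗ = 0`, summing `σₖₗ` over `l ≠ k` gives `(n-2) S - (n-1) aₖ²`, and summing this over
`k` gives `(n² - 3n + 1) S`. The integer `n² - 3n + 1` never vanishes, so `S`, then each `aₖ²`,
then each `aₖaₗ = σₖₗ - S + aₖ² + aₗ²` lies in the span of the `σₖₗ`. Any `n - 1` of the `wₖ`
form a basis, so the `aₖ` span all linear forms and their products span `Sym²`. -/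

theorem sq_sub_three_mul_add_one_ne_zero {K : Type*} [Ring K] [CharZero K] (n : ℕ) :
    (n : K) ^ 2 - 3 * n + 1 ≠ 0 := by
  have hℤ : (n : ℤ) ^ 2 - 3 * n + 1 ≠ 0 := by
    rcases le_or_gt n 2 with h | h
    · interval_cases n <;> decide
    · nlinarith
  exact_mod_cast hℤ

theorem Finset.sum_filter_ne_and_ne {ι G : Type*} [Fintype ι] [DecidableEq ι] [AddCommGroup G]
    (f : ι → G) {k l : ι} (hkl : k ≠ l) :
    ∑ j ∈ univ.filter (fun j => j ≠ k ∧ j ≠ l), f j = ∑ j, f j - f k - f l := by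
  have hfilter : univ.filter (fun j => j ≠ k ∧ j ≠ l) = (univ.erase k).erase l := by
    ext j; simp [and_comm]
  rw [hfilter, sum_erase_eq_sub (mem_erase.2 ⟨hkl.symm, mem_univ l⟩),
    sum_erase_eq_sub (mem_univ k)]

section Sigma

variable {K A ι : Type*} [Field K] [CommRing A] [Algebra K A] [Fintype ι] [DecidableEq ι]

def sigma (a : ι → A) (k l : ι) : A :=
  a k * a l + ∑ j ∈ univ.filter (fun j => j ≠ k ∧ j ≠ l), a j ^ 2

variable {a : ι → A} {V : Submodule K A}

theorem sigma_mem_span_mul_span (k l : ι) :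
    sigma a k l ∈ Submodule.span K (Set.range a) * Submodule.span K (Set.range a) := by
  have hmem (i : ι) : a i ∈ Submodule.span K (Set.range a) := Submodule.subset_span ⟨i, rfl⟩
  exact add_mem (Submodule.mul_mem_mul (hmem k) (hmem l))
    (sum_mem fun j _ => sq (a j) ▸ Submodule.mul_mem_mul (hmem j) (hmem j))

theorem sigma_eq {k l : ι} (hkl : k ≠ l) :
    sigma a k l = a k * a l + (∑ j, a j ^ 2 - a k ^ 2 - a l ^ 2) := by
  rw [sigma, sum_filter_ne_and_ne _ hkl]

theorem sigma_comm (k l : ι) : sigma a k l = sigma a l k := by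
  simp only [sigma, mul_comm (a k), and_comm]

theorem sum_erase_sigma (hsum : ∑ i, a i = 0) (k : ι) :
    ∑ l ∈ univ.erase k, sigma a k l
      = ((Fintype.card ι : K) - 2) • ∑ j, a j ^ 2 - ((Fintype.card ι : K) - 1) • a k ^ 2 := by
  have hlin : ∑ l ∈ univ.erase k, a l = -a k := by
    rw [sum_erase_eq_sub (mem_univ k), hsum, zero_sub]
  have hsq : ∑ l ∈ univ.erase k, a l ^ 2 = ∑ j, a j ^ 2 - a k ^ 2 :=
    sum_erase_eq_sub (mem_univ k)
  have hcard : ((univ.erase k).card : K) = Fintype.card ι - 1 := by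
    rw [card_erase_of_mem (mem_univ k), card_univ, Nat.cast_pred (Fintype.card_pos_iff.2 ⟨k⟩)]
  rw [sum_congr rfl fun l hl => sigma_eq (ne_of_mem_erase hl).symm, sum_add_distrib, ← mul_sum,
    hlin, mul_neg, ← sq, sum_sub_distrib, sum_const, hsq, ← Nat.cast_smul_eq_nsmul K, hcard]
  module

theorem sum_sq_mem_of_sigma_mem [CharZero K] (hsum : ∑ i, a i = 0)
    (hσ : ∀ k l, k ≠ l → sigma a k l ∈ V) : ∑ j, a j ^ 2 ∈ V := by
  have hdouble : ∑ k, ∑ l ∈ univ.erase k, sigma a k l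
      = ((Fintype.card ι : K) ^ 2 - 3 * Fintype.card ι + 1) • ∑ j, a j ^ 2 := by
    simp only [sum_erase_sigma (K := K) hsum, sum_sub_distrib, sum_const, card_univ, ← smul_sum,
      ← Nat.cast_smul_eq_nsmul K]
    module
  rw [← V.smul_mem_iff (sq_sub_three_mul_add_one_ne_zero (K := K) (Fintype.card ι)), ← hdouble]
  exact sum_mem fun k _ => sum_mem fun l hl => hσ k l (ne_of_mem_erase hl).symm

theorem sq_mem_of_sigma_mem [CharZero K] [Nontrivial ι] (hsum : ∑ i, a i = 0)
    (hσ : ∀ k l, k ≠ l → sigma a k l ∈ V) (k : ι) : a k ^ 2 ∈ V := by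
  have hn : (Fintype.card ι : K) - 1 ≠ 0 := by
    rw [sub_ne_zero, Nat.cast_ne_one]
    exact Fintype.one_lt_card.ne'
  have hS := sum_sq_mem_of_sigma_mem hsum hσ
  have hk : ∑ l ∈ univ.erase k, sigma a k l ∈ V :=
    sum_mem fun l hl => hσ k l (ne_of_mem_erase hl).symm
  rw [sum_erase_sigma (K := K) hsum, Submodule.sub_mem_iff_right _ (V.smul_mem _ hS)] at hk
  exact (V.smul_mem_iff hn).1 hk

theorem mul_mem_of_sigma_mem [CharZero K] [Nontrivial ι] (hsum : ∑ i, a i = 0)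
    (hσ : ∀ k l, k ≠ l → sigma a k l ∈ V) (k l : ι) : a k * a l ∈ V := by
  obtain rfl | hkl := eq_or_ne k l
  · exact sq (a k) ▸ sq_mem_of_sigma_mem hsum hσ k
  · have hkl' : a k * a l = sigma a k l - ∑ j, a j ^ 2 + a k ^ 2 + a l ^ 2 := by
      rw [sigma_eq hkl]
      ring
    rw [hkl']
    exact add_mem (add_mem (sub_mem (hσ k l hkl) (sum_sq_mem_of_sigma_mem hsum hσ))
      (sq_mem_of_sigma_mem hsum hσ k)) (sq_mem_of_sigma_mem hsum hσ l)

theorem span_mul_span_le_of_sigma_mem [CharZero K] [Nontrivial ι] (hsum : ∑ i, a i = 0)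
    (hσ : ∀ k l, k ≠ l → sigma a k l ∈ V) :
    Submodule.span K (Set.range a) * Submodule.span K (Set.range a) ≤ V := by
  rw [Submodule.span_mul_span, Submodule.span_le]
  rintro _ ⟨_, ⟨k, rfl⟩, _, ⟨l, rfl⟩, rfl⟩
  exact mul_mem_of_sigma_mem hsum hσ k l

end Sigma

/-- Let `w₁,…,wₙ ∈ ℂⁿ⁻¹` be in general position (any `n-1` of them linearly
independent) with `Σ wᵢ = 0`. Model `Sym²(ℂⁿ⁻¹)` as the span of quadratic monomials in
`MvPolynomial (Fin (n-1)) ℂ`, a vector `u` corresponding to the linear form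
`ℓ(u) = Σᵢ uᵢ • Xᵢ` and the symmetric product to multiplication of linear forms.
Then the elements `σ_{kl} = w_k w_l + Σ_{j≠k,l} wⱼ²` (for `k < l`) span `Sym²(ℂⁿ⁻¹)`. -/
theorem sigma_span_sym2 (n : ℕ) (hn : 2 ≤ n)
    (w : Fin n → (Fin (n - 1) → ℂ))
    (hgen : ∀ i : Fin n, LinearIndependent ℂ (fun j : {j : Fin n // j ≠ i} => w j))
    (hsum : ∑ i : Fin n, w i = 0)
    (ℓ : (Fin (n - 1) → ℂ) → MvPolynomial (Fin (n - 1)) ℂ)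
    (hℓ : ∀ u, ℓ u = ∑ i : Fin (n - 1), u i • X i)
    (σ : {p : Fin n × Fin n // p.1 < p.2} → MvPolynomial (Fin (n - 1)) ℂ)
    (hσ : ∀ kl, σ kl = ℓ (w kl.1.1) * ℓ (w kl.1.2)
      + ∑ j ∈ Finset.univ.filter (fun j => j ≠ kl.1.1 ∧ j ≠ kl.1.2), (ℓ (w j)) ^ 2) :
    Submodule.span ℂ (Set.range σ)
      = Submodule.span ℂ {q | ∃ i j : Fin (n - 1), q = X i * X j} := by
  let x : Fin (n - 1) → MvPolynomial (Fin (n - 1)) ℂ := X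
  let L := Fintype.linearCombination ℂ x
  obtain rfl : ℓ = L :=
    funext fun u => by rw [hℓ, Fintype.linearCombination_apply]
  have : Nontrivial (Fin n) := Fin.nontrivial_iff_two_le.2 hn
  have hw : Submodule.span ℂ (Set.range w) = ⊤ := by
    let i₀ : Fin n := ⟨0, by omega⟩
    have htop := (hgen i₀).span_eq_top_of_card_eq_finrank' (by simp [Fintype.card_subtype_compl])
    exact eq_top_iff.2 <| htop.ge.trans <| Submodule.span_mono <|
      Set.range_comp_subset_range Subtype.val w
  have hspan : Submodule.span ℂ (Set.range (L ∘ w))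
      = Submodule.span ℂ (Set.range x) := by
    rw [Set.range_comp, ← Submodule.map_span, hw, Submodule.map_top,
      Fintype.range_linearCombination]
  have hquad : {q | ∃ i j : Fin (n - 1), q = X i * X j} = Set.range x * Set.range x := by
    ext q
    simp [x, Set.mem_mul, eq_comm]
  rw [hquad, ← Submodule.span_mul_span, ← hspan]
  apply le_antisymm
  · rw [Submodule.span_le]
    rintro _ ⟨kl, rfl⟩
    exact hσ kl ▸ sigma_mem_span_mul_span _ _
  · refine span_mul_span_le_of_sigma_mem (by simp [← map_sum, hsum]) fun k l hkl => ?_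
    rcases hkl.lt_or_gt with h | h
    · exact Submodule.subset_span ⟨⟨(k, l), h⟩, hσ _⟩
    · exact sigma_comm (a := L ∘ w) k l ▸
        Submodule.subset_span ⟨⟨(l, k), h⟩, hσ _⟩
end
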